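/- Let η_n and η be elements of 𝓜₂. Then η_n d₂-converges to η if and only if ∫f dη_n → ∫f dη for every f ∈ C_{d₂}⁺(ℝ). -/

import Mathlib

open MeasureTheory Filter Set

noncomputable section

/-- A point measure on `ℝ`: a Borel measure that takes values in `ℕ` on bounded Borel sets
(in particular it is locally finite). -/
def IsPointMeasure (η : Measure ℝ) : Prop :=
  ∀ B : Set ℝ, MeasurableSet B → Bornology.IsBounded B → ∃ n : ℕ, η B = n

/-- Membership in the space `𝓜₂`: a nonzero point measure, finite on `[0,∞)`, whose mass on
`[-m,-m+1]` grows subgaussianly. -/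
def MemM2 (η : Measure ℝ) : Prop :=
  IsPointMeasure η ∧ η ≠ 0 ∧ η (Set.Ici 0) < ⊤ ∧
    Tendsto (fun m : ℕ =>
        (1 / (m : ℝ) ^ 2) *
          Real.log (max ((η (Set.Icc (-(m:ℝ)) (-(m:ℝ) + 1))).toReal) 1))
      atTop (nhds 0)

/-- The supremum of the support of a point measure (the position of the maximal atom). -/
noncomputable def maxM (η : Measure ℝ) : ℝ := sSup {x : ℝ | η (Set.Ici x) ≠ 0}

/-- The functions `α_k` used in the definition of the metric `d₂`. -/
noncomputable def alphaF (k : ℕ) (x : ℝ) : ℝ :=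
  if x ≤ -1 then Real.exp (-x ^ 2 / (k:ℝ))
  else if x < 0 then -Real.exp (-1 / (k:ℝ)) * x
  else 0

/-- The class `C_{d₂}⁺(ℝ)` of nonnegative bounded continuous functions vanishing
subgaussianly fast at `-∞`. -/
def MemCd2 (f : ℝ → ℝ) : Prop :=
  Continuous f ∧ (∀ x, 0 ≤ f x) ∧ (∃ Cb : ℝ, ∀ x, f x ≤ Cb) ∧
    ∃ lam > (0:ℝ), ∃ C : ℝ, ∀ᶠ x in atBot, Real.exp (lam * x ^ 2) * f x ≤ C

/-- Vague convergence of measures on `ℝ`. -/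
def VagueTendsto (ηn : ℕ → Measure ℝ) (η : Measure ℝ) : Prop :=
  ∀ h : ℝ → ℝ, Continuous h → HasCompactSupport h → (∀ x, 0 ≤ h x) →
    Tendsto (fun n => ∫ x, h x ∂(ηn n)) atTop (nhds (∫ x, h x ∂η))

/-- `d₂`-convergence in `𝓜₂`: vague convergence, convergence of the maxima, and convergence
of the integrals of the functions `α_k`. -/
def D2Tendsto (ηn : ℕ → Measure ℝ) (η : Measure ℝ) : Prop :=
  VagueTendsto ηn η ∧
    Tendsto (fun n => maxM (ηn n)) atTop (nhds (maxM η)) ∧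
    ∀ k : ℕ, 1 ≤ k →
      Tendsto (fun n => ∫ x, alphaF k x ∂(ηn n)) atTop (nhds (∫ x, alphaF k x ∂η))

open scoped Topology ENNReal

/-!
The subgaussian growth of `η [-m, -m+1]` built into `𝓜₂` makes every Gaussian `exp (-λ x²)`
integrable against `η`, hence every `f ∈ C_{d₂}⁺(ℝ)`.

(⇐) Compactly supported functions and the `α_k` lie in `C_{d₂}⁺(ℝ)`. The maximum is read off
continuous ramps vanishing on `(-∞, a]` and equal to `1` on `[b, ∞)`: the integral of such a ramp
is positive as soon as the measure charges `[b, ∞)`, and since `η_n` is integer-valued an integral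
below `1` forces `η_n [b, ∞) = 0`.

(⇒) Choose `k` with `1/k < λ`, so that `f ≤ C α_k` near `-∞`; eventually all the `η_n` vanish to
the right of `max η + 1`. Split `f = f χ_R + f (1 - χ_R)` with a compactly supported cutoff `χ_R`.
The first part converges vaguely; the tail is at most `C ∫ α_k (1 - χ_R) dη_n`, which converges to
the corresponding `η`-integral since `∫ α_k` and `∫ α_k χ_R` both converge. For `η` both tails
vanish as `R → ∞` by dominated convergence.
-/

namespace IsPointMeasure

variable {η : Measure ℝ}

lemma measure_lt_top (hη : IsPointMeasure η) {B : Set ℝ} (hB : MeasurableSet B)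
    (hb : Bornology.IsBounded B) : η B < ∞ := by
  obtain ⟨n, hn⟩ := hη B hB hb
  simp [hn]

lemma measure_eq_zero_of_lt_one (hη : IsPointMeasure η) {s : Set ℝ} (hs : MeasurableSet s)
    (h : η s < 1) : η s = 0 := by
  rw [← inter_univ s, ← Metric.iUnion_closedBall_nat (0 : ℝ), inter_iUnion]
  refine measure_iUnion_null fun n => ?_
  obtain ⟨m, hm⟩ := hη _ (hs.inter measurableSet_closedBall)
    (Metric.isBounded_closedBall.subset inter_subset_right)
  have hm1 : (m : ℝ≥0∞) < 1 := hm ▸ (measure_mono inter_subset_left).trans_lt h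
  have hm0 : m = 0 := Nat.lt_one_iff.1 (by exact_mod_cast hm1)
  rw [hm, hm0, Nat.cast_zero]

end IsPointMeasure

namespace MemM2

variable {η : Measure ℝ}

lemma measure_Ici_lt_top (hη : MemM2 η) (x : ℝ) : η (Ici x) < ∞ :=
  calc η (Ici x) ≤ η (Icc x 0 ∪ Ici 0) :=
        measure_mono fun y hy => (le_or_gt y 0).imp (fun h => ⟨hy, h⟩) le_of_lt
    _ ≤ η (Icc x 0) + η (Ici 0) := measure_union_le _ _
    _ < ∞ := ENNReal.add_lt_top.2
        ⟨hη.1.measure_lt_top measurableSet_Icc (Metric.isBounded_Icc x 0), hη.2.2.1⟩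

lemma bddAbove (hη : MemM2 η) : BddAbove {x | η (Ici x) ≠ 0} := by
  have hempty : ⋂ x : ℝ, Ici x = ∅ :=
    iInter_eq_empty_iff.2 fun y => ⟨y + 1, by simp⟩
  have hlim : Tendsto (fun x => η (Ici x)) atTop (𝓝 0) := by
    simpa [Function.comp_def, hempty] using tendsto_measure_iInter_atTop (μ := η)
      (fun x => measurableSet_Ici.nullMeasurableSet) (fun _ _ h => Ici_subset_Ici.2 h)
      ⟨0, (hη.measure_Ici_lt_top 0).ne⟩
  obtain ⟨a, ha⟩ := eventually_atTop.1 (hlim.eventually_lt_const zero_lt_one)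
  exact ⟨a, fun x hx => not_lt.1 fun hax =>
    hx (hη.1.measure_eq_zero_of_lt_one measurableSet_Ici (ha x hax.le))⟩

lemma nonempty (hη : MemM2 η) : {x | η (Ici x) ≠ 0}.Nonempty :=
  ((tendsto_measure_Ici_atBot η).eventually_ne
    (Measure.measure_univ_ne_zero.2 hη.2.1)).exists

lemma le_maxM (hη : MemM2 η) {x : ℝ} (hx : η (Ici x) ≠ 0) : x ≤ maxM η :=
  le_csSup hη.bddAbove hx

lemma maxM_le (hη : MemM2 η) {x : ℝ} (hx : η (Ici x) = 0) : maxM η ≤ x :=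
  csSup_le hη.nonempty fun _ hy => not_lt.1 fun hxy =>
    hy (measure_mono_null (Ici_subset_Ici.2 hxy.le) hx)

lemma measure_Ici_eq_zero (hη : MemM2 η) {x : ℝ} (hx : maxM η < x) : η (Ici x) = 0 :=
  not_not.1 fun h => (hη.le_maxM h).not_gt hx

lemma measure_Ici_ne_zero (hη : MemM2 η) {x : ℝ} (hx : x < maxM η) : η (Ici x) ≠ 0 := by
  obtain ⟨y, hy, hxy⟩ := exists_lt_of_lt_csSup hη.nonempty hx
  exact fun h => hy (measure_mono_null (Ici_subset_Ici.2 hxy.le) h)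

lemma eventually_measure_Icc_le (hη : MemM2 η) {ε : ℝ} (hε : 0 < ε) :
    ∀ᶠ m : ℕ in atTop,
      η (Icc (-(m : ℝ)) (-m + 1)) ≤ ENNReal.ofReal (Real.exp (ε * m ^ 2)) := by
  filter_upwards [hη.2.2.2.eventually_lt_const hε, eventually_ge_atTop 1] with m hm hm1
  have hm2 : (0 : ℝ) < (m : ℝ) ^ 2 := by positivity
  rw [ENNReal.le_ofReal_iff_toReal_le
    (hη.1.measure_lt_top measurableSet_Icc (Metric.isBounded_Icc _ _)).ne (Real.exp_nonneg _)]
  refine (le_max_left _ 1).trans ((Real.log_le_iff_le_exp (by positivity)).1 ?_)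
  rw [one_div, inv_mul_lt_iff₀ hm2] at hm
  linarith

end MemM2

lemma Iic_neg_natCast_subset_iUnion_Icc (N : ℕ) :
    Iic (-(N : ℝ)) ⊆ ⋃ i : ℕ, Icc (-((N + i + 1 : ℕ) : ℝ)) (-((N + i + 1 : ℕ) : ℝ) + 1) := by
  intro x hx
  refine mem_iUnion.2 ⟨⌊-N - x⌋₊, ?_, ?_⟩ <;> push_cast
  · linarith [Nat.lt_floor_add_one (-N - x)]
  · linarith [Nat.floor_le (show 0 ≤ -(N : ℝ) - x by linarith [mem_Iic.1 hx])]

lemma setLIntegral_gauss_Icc_le {μ : Measure ℝ} {lam : ℝ} (hlam : 0 ≤ lam) {m : ℕ}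
    (hm : 4 ≤ m) (hμ : μ (Icc (-(m : ℝ)) (-m + 1)) ≤ ENNReal.ofReal (Real.exp (lam / 4 * m ^ 2))) :
    ∫⁻ x in Icc (-(m : ℝ)) (-m + 1), ENNReal.ofReal (Real.exp (-lam * x ^ 2)) ∂μ ≤
      ENNReal.ofReal (Real.exp (-lam * (m - 1))) := by
  have hm4 : (4 : ℝ) ≤ m := by exact_mod_cast hm
  calc ∫⁻ x in Icc (-(m : ℝ)) (-m + 1), ENNReal.ofReal (Real.exp (-lam * x ^ 2)) ∂μ
      ≤ ∫⁻ _ in Icc (-(m : ℝ)) (-m + 1), ENNReal.ofReal (Real.exp (-lam * (m - 1) ^ 2)) ∂μ := by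
        refine setLIntegral_mono measurable_const fun x hx => ?_
        refine ENNReal.ofReal_le_ofReal (Real.exp_le_exp.2 ?_)
        nlinarith [mul_nonneg hlam (mul_nonneg (by linarith [hx.2] : (0 : ℝ) ≤ -x - (m - 1))
          (by linarith [hx.2] : (0 : ℝ) ≤ -x + (m - 1)))]
    _ = ENNReal.ofReal (Real.exp (-lam * (m - 1) ^ 2)) * μ (Icc (-(m : ℝ)) (-m + 1)) :=
        setLIntegral_const _ _
    _ ≤ ENNReal.ofReal (Real.exp (-lam * (m - 1) ^ 2)) *
          ENNReal.ofReal (Real.exp (lam / 4 * m ^ 2)) := by gcongr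
    _ = ENNReal.ofReal (Real.exp (-lam * (m - 1) ^ 2 + lam / 4 * m ^ 2)) := by
        rw [← ENNReal.ofReal_mul (Real.exp_nonneg _), ← Real.exp_add]
    _ ≤ ENNReal.ofReal (Real.exp (-lam * (m - 1))) := by
        refine ENNReal.ofReal_le_ofReal (Real.exp_le_exp.2 ?_)
        -- the difference of the two sides is `lam / 4 * (3 m² - 12 m + 8)`, nonnegative for `m ≥ 4`
        nlinarith [mul_nonneg hlam (by nlinarith : (0 : ℝ) ≤ 3 * m ^ 2 - 12 * m + 8)]

namespace MemM2

variable {η : Measure ℝ}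

lemma integrable_of_integrableOn_Iic (hη : MemM2 η) {f : ℝ → ℝ}
    (hf : AEStronglyMeasurable f η) {C : ℝ} (hC : ∀ x, |f x| ≤ C) {a : ℝ}
    (ha : IntegrableOn f (Iic a) η) : Integrable f η := by
  rw [← integrableOn_univ, ← Iic_union_Ioi (a := a)]
  exact ha.union (Measure.integrableOn_of_bounded
    ((measure_mono Ioi_subset_Ici_self).trans_lt (hη.measure_Ici_lt_top a)).ne
    hf (ae_of_all _ hC))

lemma integrable_gauss (hη : MemM2 η) {lam : ℝ} (hlam : 0 < lam) :
    Integrable (fun x => Real.exp (-lam * x ^ 2)) η := by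
  obtain ⟨N, hN⟩ := eventually_atTop.1
    ((hη.eventually_measure_Icc_le (by positivity : 0 < lam / 4)).and (eventually_ge_atTop 4))
  refine hη.integrable_of_integrableOn_Iic (by fun_prop) (C := 1) (a := -N) (fun x => ?_) ?_
  · rw [abs_of_pos (Real.exp_pos _)]
    exact Real.exp_le_one_iff.2 (by nlinarith [sq_nonneg x])
  refine ⟨by fun_prop, ?_⟩
  rw [hasFiniteIntegral_iff_ofReal (ae_of_all _ fun x => (Real.exp_pos _).le)]
  set r := ENNReal.ofReal (Real.exp (-lam))
  have hshell : ∀ i : ℕ, ∫⁻ x in Icc (-((N + i + 1 : ℕ) : ℝ)) (-((N + i + 1 : ℕ) : ℝ) + 1),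
      ENNReal.ofReal (Real.exp (-lam * x ^ 2)) ∂η ≤ r ^ i := by
    intro i
    obtain ⟨hμ, hm⟩ := hN (N + i + 1) (by omega)
    refine (setLIntegral_gauss_Icc_le hlam.le hm hμ).trans ?_
    rw [← ENNReal.ofReal_pow (Real.exp_nonneg _), ← Real.exp_nat_mul]
    refine ENNReal.ofReal_le_ofReal (Real.exp_le_exp.2 ?_)
    push_cast
    nlinarith [mul_nonneg hlam.le (N.cast_nonneg : (0 : ℝ) ≤ N)]
  calc ∫⁻ x in Iic (-(N : ℝ)), ENNReal.ofReal (Real.exp (-lam * x ^ 2)) ∂η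
      ≤ ∑' i : ℕ, ∫⁻ x in Icc (-((N + i + 1 : ℕ) : ℝ)) (-((N + i + 1 : ℕ) : ℝ) + 1),
          ENNReal.ofReal (Real.exp (-lam * x ^ 2)) ∂η :=
        (lintegral_mono_set (Iic_neg_natCast_subset_iUnion_Icc N)).trans
          (lintegral_iUnion_le _ _)
    _ ≤ ∑' i : ℕ, r ^ i := ENNReal.tsum_le_tsum hshell
    _ < ∞ := by
        rw [ENNReal.tsum_geometric]
        exact ENNReal.inv_lt_top.2 (tsub_pos_iff_lt.2
          (ENNReal.ofReal_lt_one.2 (Real.exp_lt_one_iff.2 (by linarith))))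

end MemM2

lemma memCd2_of_eq_zero_of_le {f : ℝ → ℝ} (hfc : Continuous f) (hf0 : ∀ x, 0 ≤ f x) {C : ℝ}
    (hfC : ∀ x, f x ≤ C) {a : ℝ} (hfa : ∀ x ≤ a, f x = 0) : MemCd2 f :=
  ⟨hfc, hf0, ⟨C, hfC⟩, 1, one_pos, 0,
    (eventually_le_atBot a).mono fun x hx => by rw [hfa x hx, mul_zero]⟩

lemma memCd2_of_hasCompactSupport {f : ℝ → ℝ} (hfc : Continuous f) (hfs : HasCompactSupport f)
    (hf0 : ∀ x, 0 ≤ f x) : MemCd2 f := by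
  obtain ⟨C, hC⟩ := hfc.bounded_above_of_compact_support hfs
  obtain ⟨b, hb⟩ := hfs.isCompact.bddBelow
  refine memCd2_of_eq_zero_of_le hfc hf0 (C := C) (fun x => (le_abs_self _).trans (hC x))
    (a := b - 1) fun x hx => image_eq_zero_of_notMem_tsupport fun hmem => ?_
  linarith [hb hmem]

lemma exists_memCd2_ramp {a b : ℝ} (hab : a < b) :
    ∃ f : ℝ → ℝ, MemCd2 f ∧ (∀ x ≤ a, f x = 0) ∧ ∀ x, b ≤ x → f x = 1 := by
  obtain ⟨f, hf0, hf1, hf01⟩ := exists_continuous_zero_one_of_isClosed isClosed_Iic isClosed_Ici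
    (Iic_disjoint_Ici.2 (not_le.2 hab))
  exact ⟨f, memCd2_of_eq_zero_of_le f.continuous (fun x => (hf01 x).1) (fun x => (hf01 x).2)
    (fun x hx => hf0 hx), fun x hx => hf0 hx, fun x hx => hf1 hx⟩

lemma alphaF_of_le_neg_one (k : ℕ) {x : ℝ} (hx : x ≤ -1) :
    alphaF k x = Real.exp (-x ^ 2 / k) :=
  if_pos hx

lemma alphaF_eq_min (k : ℕ) (x : ℝ) :
    alphaF k x = min (Real.exp (-x ^ 2 / k)) (Real.exp (-1 / k) * max 0 (-x)) := by
  have hk : (0 : ℝ) ≤ k := k.cast_nonneg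
  rcases le_or_gt x (-1) with h1 | h1
  · rw [alphaF_of_le_neg_one k h1, max_eq_right (by linarith), min_eq_left]
    calc Real.exp (-x ^ 2 / k) ≤ Real.exp (-1 / k) :=
          Real.exp_le_exp.2 (div_le_div_of_nonneg_right (by nlinarith) hk)
      _ ≤ Real.exp (-1 / k) * -x := le_mul_of_one_le_right (Real.exp_nonneg _) (by linarith)
  rcases lt_or_ge x 0 with h0 | h0
  · rw [alphaF, if_neg (not_le.2 h1), if_pos h0, max_eq_right (by linarith), min_eq_right]
    · ring
    calc Real.exp (-1 / k) * -x ≤ Real.exp (-1 / k) :=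
          mul_le_of_le_one_right (Real.exp_nonneg _) (by linarith)
      _ ≤ Real.exp (-x ^ 2 / k) :=
          Real.exp_le_exp.2 (div_le_div_of_nonneg_right (by nlinarith) hk)
  · rw [alphaF, if_neg (by linarith), if_neg (not_lt.2 h0), max_eq_left (by linarith), mul_zero,
      min_eq_right (Real.exp_nonneg _)]

lemma continuous_alphaF (k : ℕ) : Continuous (alphaF k) := by
  simp_rw [funext (alphaF_eq_min k)]
  fun_prop

lemma alphaF_nonneg (k : ℕ) (x : ℝ) : 0 ≤ alphaF k x := by
  rw [alphaF_eq_min]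
  exact le_min (Real.exp_nonneg _) (mul_nonneg (Real.exp_nonneg _) (le_max_left _ _))

lemma alphaF_le_one (k : ℕ) (x : ℝ) : alphaF k x ≤ 1 := by
  rw [alphaF_eq_min]
  exact (min_le_left _ _).trans
    (Real.exp_le_one_iff.2 (div_nonpos_of_nonpos_of_nonneg (by nlinarith) k.cast_nonneg))

lemma memCd2_alphaF {k : ℕ} (hk : 1 ≤ k) : MemCd2 (alphaF k) := by
  have hk0 : (0 : ℝ) < k := by exact_mod_cast hk
  refine ⟨continuous_alphaF k, alphaF_nonneg k, ⟨1, alphaF_le_one k⟩, 1 / (2 * k),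
    by positivity, 1, (eventually_le_atBot (-1)).mono fun x hx => ?_⟩
  rw [alphaF_of_le_neg_one k hx, ← Real.exp_add, Real.exp_le_one_iff]
  have : 1 / (2 * k) * x ^ 2 + -x ^ 2 / k = -(x ^ 2 / (2 * k)) := by field_simp; ring
  rw [this, neg_nonpos]
  positivity

namespace MemCd2

variable {f : ℝ → ℝ}

lemma exists_le_mul_gauss (hf : MemCd2 f) :
    ∃ lam > 0, ∃ C a : ℝ, ∀ x ≤ a, f x ≤ C * Real.exp (-lam * x ^ 2) := by
  obtain ⟨-, -, -, lam, hlam, C, hC⟩ := hf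
  obtain ⟨a, ha⟩ := eventually_atBot.1 hC
  refine ⟨lam, hlam, C, a, fun x hx => ?_⟩
  calc f x = Real.exp (-lam * x ^ 2) * (Real.exp (lam * x ^ 2) * f x) := by
        rw [← mul_assoc, ← Real.exp_add, neg_mul, neg_add_cancel, Real.exp_zero, one_mul]
    _ ≤ Real.exp (-lam * x ^ 2) * C := by gcongr; exact ha x hx
    _ = C * Real.exp (-lam * x ^ 2) := mul_comm _ _

lemma exists_le_mul_alphaF (hf : MemCd2 f) :
    ∃ k ≥ 1, ∃ C M : ℝ, ∀ x ≤ M, f x ≤ C * alphaF k x := by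
  obtain ⟨lam, hlam, C, a, hfa⟩ := hf.exists_le_mul_gauss
  obtain ⟨n, hn⟩ := exists_nat_one_div_lt hlam
  refine ⟨n + 1, Nat.le_add_left 1 n, C, min a (-1), fun x hx => ?_⟩
  have hfx := hfa x (hx.trans (min_le_left _ _))
  have hC : 0 ≤ C := nonneg_of_mul_nonneg_left ((hf.2.1 x).trans hfx) (Real.exp_pos _)
  refine hfx.trans (mul_le_mul_of_nonneg_left ?_ hC)
  rw [alphaF_of_le_neg_one _ (hx.trans (min_le_right _ _)), Real.exp_le_exp, neg_div,
    neg_mul, neg_le_neg_iff, div_eq_mul_one_div, mul_comm]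
  push_cast
  exact mul_le_mul_of_nonneg_right hn.le (sq_nonneg x)

end MemCd2

lemma MemM2.integrable {η : Measure ℝ} (hη : MemM2 η) {f : ℝ → ℝ} (hf : MemCd2 f) :
    Integrable f η := by
  obtain ⟨lam, hlam, C, a, hfa⟩ := hf.exists_le_mul_gauss
  obtain ⟨hfc, hf0, ⟨Cb, hCb⟩, -⟩ := hf
  refine hη.integrable_of_integrableOn_Iic hfc.aestronglyMeasurable
    (fun x => (abs_of_nonneg (hf0 x)).trans_le (hCb x)) (a := a) ?_
  refine ((hη.integrable_gauss hlam).const_mul C).integrableOn.mono'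
    hfc.aestronglyMeasurable.restrict (ae_restrict_of_forall_mem measurableSet_Iic fun x hx => ?_)
  rw [Real.norm_of_nonneg (hf0 x)]
  exact hfa x hx

section Maximum

variable {ηn : ℕ → Measure ℝ} {η : Measure ℝ} (hηn : ∀ n, MemM2 (ηn n)) (hη : MemM2 η)
  (H : ∀ f : ℝ → ℝ, MemCd2 f → Tendsto (fun n => ∫ x, f x ∂ηn n) atTop (𝓝 (∫ x, f x ∂η)))
include hηn hη H

lemma eventually_maxM_le {a : ℝ} (ha : maxM η < a) : ∀ᶠ n in atTop, maxM (ηn n) ≤ a := by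
  obtain ⟨b, hb, hba⟩ := exists_between ha
  obtain ⟨f, hf, hf0, hf1⟩ := exists_memCd2_ramp hba
  have hη0 : ∫ x, f x ∂η = 0 := by
    refine integral_eq_zero_of_ae (ae_iff.2 (measure_mono_null (fun x hx => ?_)
      (hη.measure_Ici_eq_zero hb)))
    exact le_of_not_gt fun hxb => hx (hf0 x hxb.le)
  filter_upwards [(H f hf).eventually_lt_const (hη0 ▸ zero_lt_one)] with n hn
  have hreal : (ηn n).real (Ici a) < 1 :=
    calc (ηn n).real (Ici a) = ∫ x in Ici a, f x ∂ηn n := by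
          rw [setIntegral_congr_fun measurableSet_Ici hf1, setIntegral_const, smul_eq_mul, mul_one]
      _ ≤ ∫ x, f x ∂ηn n := setIntegral_le_integral ((hηn n).integrable hf) (ae_of_all _ hf.2.1)
      _ < 1 := hn
  refine (hηn n).maxM_le ((hηn n).1.measure_eq_zero_of_lt_one measurableSet_Ici ?_)
  rwa [← ofReal_measureReal ((hηn n).measure_Ici_lt_top a).ne, ENNReal.ofReal_lt_one]

lemma eventually_le_maxM {a : ℝ} (ha : a < maxM η) : ∀ᶠ n in atTop, a ≤ maxM (ηn n) := by
  obtain ⟨b, hab, hb⟩ := exists_between ha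
  obtain ⟨f, hf, hf0, hf1⟩ := exists_memCd2_ramp hab
  have hpos : ∀ μ : Measure ℝ, MemM2 μ → (0 < ∫ x, f x ∂μ ↔ 0 < μ (Function.support f)) :=
    fun μ hμ => integral_pos_iff_support_of_nonneg hf.2.1 (hμ.integrable hf)
  have hηf : 0 < ∫ x, f x ∂η := (hpos η hη).2 <| pos_iff_ne_zero.2 fun h =>
    hη.measure_Ici_ne_zero hb (measure_mono_null (fun x hx => by simp [hf1 x hx]) h)
  filter_upwards [(H f hf).eventually_const_lt hηf] with n hn
  refine (hηn n).le_maxM fun h => ((hpos _ (hηn n)).1 hn).ne' (measure_mono_null (fun x hx => ?_) h)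
  exact le_of_not_gt fun hxa => hx (hf0 x hxa.le)

lemma tendsto_maxM : Tendsto (fun n => maxM (ηn n)) atTop (𝓝 (maxM η)) := by
  refine tendsto_order.2 ⟨fun a ha => ?_, fun a ha => ?_⟩
  · obtain ⟨b, hab, hb⟩ := exists_between ha
    exact (eventually_le_maxM hηn hη H hb).mono fun n hn => hab.trans_le hn
  · obtain ⟨b, hb, hba⟩ := exists_between ha
    exact (eventually_maxM_le hηn hη H hb).mono fun n hn => hn.trans_lt hba

end Maximum

lemma tendsto_of_forall_pos_approx {ι : Type*} {l : Filter ι} {u : ι → ℝ} {L : ℝ}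
    (h : ∀ ε > 0, ∃ (a b : ι → ℝ) (A B : ℝ), Tendsto a l (𝓝 A) ∧ Tendsto b l (𝓝 B) ∧
      (∀ᶠ i in l, |u i - a i| ≤ b i) ∧ |L - A| + B < ε) :
    Tendsto u l (𝓝 L) := by
  refine Metric.tendsto_nhds.2 fun ε hε => ?_
  obtain ⟨a, b, A, B, ha, hb, hab, hAB⟩ := h ε hε
  have hlim : Tendsto (fun i => |a i - A| + b i) l (𝓝 (|A - A| + B)) :=
    (ha.sub_const A).abs.add hb
  rw [sub_self, abs_zero, zero_add] at hlim
  filter_upwards [hlim.eventually_lt_const (by linarith : B < ε - |L - A|), hab] with i hi hui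
  rw [Real.dist_eq]
  calc |u i - L| ≤ |u i - a i| + |a i - A| + |A - L| :=
        (abs_sub_le (u i) (a i) L).trans (by linarith [abs_sub_le (a i) A L])
    _ < ε := by rw [abs_sub_comm A L]; linarith

section Cutoff

def cutoff (R : ℕ) : ContDiffBump (0 : ℝ) :=
  ⟨R + 1, R + 2, by positivity, by linarith⟩

lemma cutoff_mem_Icc (R : ℕ) (x : ℝ) : cutoff R x ∈ Icc 0 1 :=
  ⟨(cutoff R).nonneg, (cutoff R).le_one⟩

lemma cutoff_eq_one {R : ℕ} {x : ℝ} (hx : |x| ≤ R + 1) : cutoff R x = 1 :=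
  (cutoff R).one_of_mem_closedBall (by rwa [Metric.mem_closedBall, Real.dist_0_eq_abs])

variable {μ : Measure ℝ} {h : ℝ → ℝ}

lemma MeasureTheory.Integrable.mul_cutoff (hh : Integrable h μ) (R : ℕ) :
    Integrable (fun x => h x * cutoff R x) μ :=
  hh.mul_bdd (cutoff R).continuous.aestronglyMeasurable (c := 1) (ae_of_all _ fun x => by
    rw [Real.norm_of_nonneg (cutoff_mem_Icc R x).1]; exact (cutoff_mem_Icc R x).2)

lemma MeasureTheory.Integrable.mul_one_sub_cutoff (hh : Integrable h μ) (R : ℕ) :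
    Integrable (fun x => h x * (1 - cutoff R x)) μ := by
  convert hh.sub (hh.mul_cutoff R) using 1
  ext x
  simp only [Pi.sub_apply]
  ring

lemma integral_sub_integral_mul_cutoff (hh : Integrable h μ) (R : ℕ) :
    ∫ x, h x ∂μ - ∫ x, h x * cutoff R x ∂μ = ∫ x, h x * (1 - cutoff R x) ∂μ := by
  rw [← integral_sub hh (hh.mul_cutoff R)]
  simp [mul_sub]

lemma tendsto_integral_mul_one_sub_cutoff (hh : Integrable h μ) :
    Tendsto (fun R : ℕ => ∫ x, h x * (1 - cutoff R x) ∂μ) atTop (𝓝 0) := by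
  have hlim := tendsto_integral_of_dominated_convergence (μ := μ) (f := fun _ => (0 : ℝ))
    (fun x => ‖h x‖) (fun R => (hh.mul_one_sub_cutoff R).aestronglyMeasurable) hh.norm
    (fun R => ae_of_all _ fun x => ?_) (ae_of_all _ fun x => ?_)
  · simpa using hlim
  · rw [norm_mul, Real.norm_of_nonneg (sub_nonneg.2 (cutoff_mem_Icc R x).2)]
    exact mul_le_of_le_one_right (norm_nonneg _) (by linarith [(cutoff_mem_Icc R x).1])
  · refine tendsto_const_nhds.congr' ((eventually_ge_atTop ⌈|x|⌉₊).mono fun R hR => ?_)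
    have hx : |x| ≤ R + 1 := by linarith [(Nat.ceil_le.1 hR : |x| ≤ R)]
    simp only [cutoff_eq_one hx, sub_self, mul_zero]

lemma integral_mul_one_sub_cutoff_le {f g : ℝ → ℝ} (hfμ : Integrable f μ)
    (hgμ : Integrable g μ) {C M A : ℝ} (hfg : ∀ x ≤ M, f x ≤ C * g x)
    (hμA : μ (Ioi A) = 0) {R : ℕ} (hRM : -M ≤ R) (hRA : A ≤ R) :
    ∫ x, f x * (1 - cutoff R x) ∂μ ≤ C * ∫ x, g x * (1 - cutoff R x) ∂μ := by
  rw [← integral_const_mul]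
  refine integral_mono_ae (hfμ.mul_one_sub_cutoff R) ((hgμ.mul_one_sub_cutoff R).const_mul C)
    (measure_mono_null (fun x hx => ?_) hμA)
  simp only [mem_compl_iff, mem_ofPred_eq] at hx
  by_contra hxA
  rw [mem_Ioi, not_lt] at hxA
  refine hx ?_
  rcases le_or_gt |x| (R + 1) with hx1 | hx1
  · simp [cutoff_eq_one hx1]
  · have hxM : x ≤ M := by
      cases abs_cases x <;> linarith
    rw [← mul_assoc]
    exact mul_le_mul_of_nonneg_right (hfg x hxM) (sub_nonneg.2 (cutoff_mem_Icc R x).2)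

theorem tendsto_integral_of_vagueTendsto_of_le_mul {μs : ℕ → Measure ℝ} (hv : VagueTendsto μs μ)
    {f g : ℝ → ℝ} (hfc : Continuous f) (hf0 : ∀ x, 0 ≤ f x) (hgc : Continuous g)
    (hg0 : ∀ x, 0 ≤ g x) (hfμ : Integrable f μ) (hfμs : ∀ n, Integrable f (μs n))
    (hgμ : Integrable g μ) (hgμs : ∀ n, Integrable g (μs n))
    (hg : Tendsto (fun n => ∫ x, g x ∂μs n) atTop (𝓝 (∫ x, g x ∂μ)))
    {C M A : ℝ} (hfg : ∀ x ≤ M, f x ≤ C * g x) (hA : ∀ᶠ n in atTop, μs n (Ioi A) = 0) :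
    Tendsto (fun n => ∫ x, f x ∂μs n) atTop (𝓝 (∫ x, f x ∂μ)) := by
  have hvague : ∀ {h : ℝ → ℝ}, Continuous h → (∀ x, 0 ≤ h x) → ∀ R : ℕ,
      Tendsto (fun n => ∫ x, h x * cutoff R x ∂μs n) atTop (𝓝 (∫ x, h x * cutoff R x ∂μ)) :=
    fun hc h0 R => hv _ (hc.mul (cutoff R).continuous)
      ((cutoff R).hasCompactSupport.mul_left) fun x => mul_nonneg (h0 x) (cutoff_mem_Icc R x).1
  refine tendsto_of_forall_pos_approx fun ε hε => ?_
  have htails : Tendsto (fun R : ℕ => |∫ x, f x * (1 - cutoff R x) ∂μ| +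
      C * ∫ x, g x * (1 - cutoff R x) ∂μ) atTop (𝓝 0) := by
    simpa using (tendsto_integral_mul_one_sub_cutoff hfμ).abs.add
      ((tendsto_integral_mul_one_sub_cutoff hgμ).const_mul C)
  obtain ⟨R, hRε, hRM, hRA⟩ := ((htails.eventually_lt_const hε).and
    ((tendsto_natCast_atTop_atTop.eventually_ge_atTop (-M)).and
      (tendsto_natCast_atTop_atTop.eventually_ge_atTop A))).exists
  refine ⟨fun n => ∫ x, f x * cutoff R x ∂μs n, fun n => C * ∫ x, g x * (1 - cutoff R x) ∂μs n,
    ∫ x, f x * cutoff R x ∂μ, C * ∫ x, g x * (1 - cutoff R x) ∂μ, hvague hfc hf0 R, ?_, ?_, ?_⟩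
  · have hlim := (hg.sub (hvague hgc hg0 R)).const_mul C
    rw [integral_sub_integral_mul_cutoff hgμ] at hlim
    exact hlim.congr fun n => by rw [integral_sub_integral_mul_cutoff (hgμs n)]
  · filter_upwards [hA] with n hn
    rw [integral_sub_integral_mul_cutoff (hfμs n), abs_of_nonneg (integral_nonneg fun x =>
      mul_nonneg (hf0 x) (sub_nonneg.2 (cutoff_mem_Icc R x).2))]
    exact integral_mul_one_sub_cutoff_le (hfμs n) (hgμs n) hfg hn hRM hRA
  · rwa [integral_sub_integral_mul_cutoff hfμ]

end Cutoff

/-- Lemma 3.2: `d₂`-convergence in `𝓜₂` is equivalent to convergence of the integrals of all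
test functions in `C_{d₂}⁺(ℝ)`. -/
theorem d2_convergence_iff_Cd2
    (ηn : ℕ → Measure ℝ) (η : Measure ℝ)
    (hn : ∀ n, MemM2 (ηn n)) (hη : MemM2 η) :
    D2Tendsto ηn η ↔
      ∀ f : ℝ → ℝ, MemCd2 f →
        Tendsto (fun n => ∫ x, f x ∂(ηn n)) atTop (nhds (∫ x, f x ∂η)) := by
  constructor
  · rintro ⟨hvague, hmax, halpha⟩ f hf
    obtain ⟨k, hk, C, M, hfα⟩ := hf.exists_le_mul_alphaF
    have hα := memCd2_alphaF hk
    have hA : ∀ᶠ n in atTop, ηn n (Ioi (maxM η + 1)) = 0 :=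
      (hmax.eventually_lt_const (lt_add_one _)).mono fun n h =>
        measure_mono_null Ioi_subset_Ici_self ((hn n).measure_Ici_eq_zero h)
    exact tendsto_integral_of_vagueTendsto_of_le_mul hvague hf.1 hf.2.1 (continuous_alphaF k)
      (alphaF_nonneg k) (hη.integrable hf) (fun n => (hn n).integrable hf) (hη.integrable hα)
      (fun n => (hn n).integrable hα) (halpha k hk) hfα hA
  · intro H
    exact ⟨fun h hc hs h0 => H h (memCd2_of_hasCompactSupport hc hs h0), tendsto_maxM hn hη H,
      fun k hk => H _ (memCd2_alphaF hk)⟩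

end
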